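/- Let H be a dephased N×N complex Hadamard matrix and let V be a real vector subspace of N×N real matrices with vanishing first row and first column such that for every R ∈ V the matrix H ∘ EXP(i·R) (entrywise product of H with the entrywise exponential of i·R) is a complex Hadamard matrix. Then V is contained in the solution space defining the defect of H; in particular, the dimension of V is at most the defect d(H). -/

import Mathlib

/-- A complex Hadamard matrix: all entries of modulus one, and `H * Hᴴ = N • 1`. -/
def IsComplexHadamard {n : Type*} [Fintype n] [DecidableEq n] (H : Matrix n n ℂ) : Prop :=
  (∀ i j, ‖H i j‖ = 1) ∧
    H * H.conjTranspose = (Fintype.card n : ℂ) • (1 : Matrix n n ℂ)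

/-- Dephased w.r.t. the distinguished index `i0`: all entries of the `i0`-th row
and column are equal to `1`. -/
def IsDephased {n : Type*} (H : Matrix n n ℂ) (i0 : n) : Prop :=
  (∀ j, H i0 j = 1) ∧ (∀ i, H i i0 = 1)

/-- The solution space of the real linear system defining the defect of `H`:
`R` has vanishing first row (off the corner) and first column, and
`∑_k H_ik · conj(H_jk) · (R_ik − R_jk) = 0` for all `i < j`. -/
def defectSpace (N : ℕ) (hN : 0 < N) (H : Matrix (Fin N) (Fin N) ℂ) :
    Submodule ℝ (Matrix (Fin N) (Fin N) ℝ) where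
  carrier := { R |
    (∀ j : Fin N, j ≠ ⟨0, hN⟩ → R ⟨0, hN⟩ j = 0) ∧
    (∀ i : Fin N, R i ⟨0, hN⟩ = 0) ∧
    (∀ i j : Fin N, i < j →
      ∑ k : Fin N, H i k * (starRingEnd ℂ) (H j k) * (((R i k : ℝ) : ℂ) - ((R j k : ℝ) : ℂ)) = 0) }
  zero_mem' := by
    refine ⟨fun j _ => rfl, fun i => rfl, fun i j hij => ?_⟩
    simp
  add_mem' := by
    rintro R S ⟨hR1, hR2, hR3⟩ ⟨hS1, hS2, hS3⟩
    refine ⟨fun j hj => ?_, fun i => ?_, fun i j hij => ?_⟩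
    · simp [Matrix.add_apply, hR1 j hj, hS1 j hj]
    · simp [Matrix.add_apply, hR2 i, hS2 i]
    · have key : ∀ k : Fin N,
        H i k * (starRingEnd ℂ) (H j k) * ((((R + S) i k : ℝ) : ℂ) - (((R + S) j k : ℝ) : ℂ)) =
          H i k * (starRingEnd ℂ) (H j k) * (((R i k : ℝ) : ℂ) - ((R j k : ℝ) : ℂ)) +
          H i k * (starRingEnd ℂ) (H j k) * (((S i k : ℝ) : ℂ) - ((S j k : ℝ) : ℂ)) := by
        intro k
        simp only [Matrix.add_apply]
        push_cast
        ring
      rw [Finset.sum_congr rfl fun k _ => key k, Finset.sum_add_distrib,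
        hR3 i j hij, hS3 i j hij, add_zero]
  smul_mem' := by
    rintro c R ⟨hR1, hR2, hR3⟩
    refine ⟨fun j hj => ?_, fun i => ?_, fun i j hij => ?_⟩
    · simp [Matrix.smul_apply, hR1 j hj]
    · simp [Matrix.smul_apply, hR2 i]
    · have key : ∀ k : Fin N,
        H i k * (starRingEnd ℂ) (H j k) * ((((c • R) i k : ℝ) : ℂ) - (((c • R) j k : ℝ) : ℂ)) =
          (c : ℂ) * (H i k * (starRingEnd ℂ) (H j k) * (((R i k : ℝ) : ℂ) - ((R j k : ℝ) : ℂ))) := by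
        intro k
        simp only [Matrix.smul_apply, smul_eq_mul]
        push_cast
        ring
      rw [Finset.sum_congr rfl fun k _ => key k, ← Finset.mul_sum, hR3 i j hij, mul_zero]

/-- The defect of a complex Hadamard matrix: the dimension of `defectSpace`. -/
noncomputable def defect (N : ℕ) (hN : 0 < N) (H : Matrix (Fin N) (Fin N) ℂ) : ℕ :=
  Module.finrank ℝ (defectSpace N hN H)

/-- If `V` is a real subspace of `N×N` real matrices with vanishing
first row and column such that `H ∘ EXP(i·R)` is a complex Hadamard matrix for every
`R ∈ V`, then `V` is contained in the solution space defining the defect of `H`;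
in particular `dim V ≤ d(H)`. -/

lemma deriv_sum_exp_zero {N : ℕ} (c : Fin N → ℂ) (d : Fin N → ℝ)
    (h : ∀ t : ℝ, ∑ k, c k * Complex.exp (Complex.I * ((t * d k : ℝ) : ℂ)) = 0) :
    ∑ k, c k * ((d k : ℝ) : ℂ) = 0 := by
  have hder : HasDerivAt (fun t : ℝ => ∑ k, c k * Complex.exp (Complex.I * ((t * d k : ℝ) : ℂ)))
      (∑ k, c k * (Complex.I * (d k : ℂ))) 0 := by
    apply HasDerivAt.fun_sum
    intro k _
    have h1 : HasDerivAt (fun t : ℝ => ((t : ℂ) * (d k : ℂ))) ((d k : ℂ)) 0 := by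
      simpa using (Complex.ofRealCLM.hasDerivAt (x := (0:ℝ))).mul_const ((d k : ℂ))
    have h2 : HasDerivAt (fun t : ℝ => Complex.I * ((t : ℂ) * (d k : ℂ)))
        (Complex.I * (d k : ℂ)) 0 := h1.const_mul Complex.I
    have h3 := h2.cexp
    simp only [Complex.ofReal_zero, zero_mul, mul_zero, Complex.exp_zero, mul_one] at h3
    simp only [one_mul] at h3
    have h4 := h3.const_mul (c k)
    convert h4 using 2 with t
    · rfl
    push_cast
    ring_nf
  have hzero : HasDerivAt (fun t : ℝ => ∑ k, c k * Complex.exp (Complex.I * ((t * d k : ℝ) : ℂ)))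
      0 0 := by
    have : (fun t : ℝ => ∑ k, c k * Complex.exp (Complex.I * ((t * d k : ℝ) : ℂ)))
        = fun _ => (0 : ℂ) := funext h
    rw [this]; exact hasDerivAt_const 0 0
  have := hder.unique hzero
  have hI : Complex.I * ∑ k, c k * ((d k : ℝ) : ℂ) = 0 := by
    rw [Finset.mul_sum]
    rw [← this]
    apply Finset.sum_congr rfl
    intro k _; ring
  rcases mul_eq_zero.1 hI with h | h
  · exact absurd h Complex.I_ne_zero
  · exact h

theorem affine_family_le_defect (N : ℕ) (hN : 0 < N)
    (H : Matrix (Fin N) (Fin N) ℂ) (hH : IsComplexHadamard H)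
    (hdeph : IsDephased H ⟨0, hN⟩)
    (V : Submodule ℝ (Matrix (Fin N) (Fin N) ℝ))
    (hV0 : ∀ R ∈ V, (∀ j : Fin N, R ⟨0, hN⟩ j = 0) ∧ (∀ i : Fin N, R i ⟨0, hN⟩ = 0))
    (hVH : ∀ R ∈ V, IsComplexHadamard
      (Matrix.of fun i j => H i j * Complex.exp (Complex.I * ((R i j : ℝ) : ℂ)))) :
    V ≤ defectSpace N hN H ∧ Module.finrank ℝ V ≤ defect N hN H := by
  have hle : V ≤ defectSpace N hN H := by
    intro R hR
    refine ⟨fun j _ => (hV0 R hR).1 j, fun i => (hV0 R hR).2 i, fun i j hij => ?_⟩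
    set c : Fin N → ℂ := fun k => H i k * (starRingEnd ℂ) (H j k) with hc
    set d : Fin N → ℝ := fun k => R i k - R j k with hd
    have key : ∀ t : ℝ, ∑ k, c k * Complex.exp (Complex.I * ((t * d k : ℝ) : ℂ)) = 0 := by
      intro t
      have htR : t • R ∈ V := V.smul_mem t hR
      have hHad := hVH (t • R) htR
      have := congrFun (congrFun hHad.2 i) j
      rw [Matrix.mul_apply] at this
      have hij' : (i : Fin N) ≠ j := ne_of_lt hij
      rw [Matrix.smul_apply, Matrix.one_apply_ne hij', smul_zero] at this
      rw [← this]
      apply Finset.sum_congr rfl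
      intro k _
      simp only [Matrix.conjTranspose_apply, Matrix.of_apply, Matrix.smul_apply, smul_eq_mul,
        star_mul', Complex.star_def, hc, hd]
      rw [show Complex.I * ((t * (R i k - R j k) : ℝ) : ℂ)
          = Complex.I * ((t * R i k : ℝ) : ℂ) + -(Complex.I * ((t * R j k : ℝ) : ℂ)) by
        push_cast; ring, Complex.exp_add, ← Complex.exp_conj,
        show (starRingEnd ℂ) (Complex.I * ((t * R j k : ℝ) : ℂ))
            = -(Complex.I * ((t * R j k : ℝ) : ℂ)) by simp [Complex.conj_I]]
      ring
    have := deriv_sum_exp_zero c d key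
    rw [← this]
    apply Finset.sum_congr rfl
    intro k _
    simp only [hc, hd]
    push_cast
    ring
  refine ⟨hle, ?_⟩
  exact Submodule.finrank_mono hle
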